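/- arXiv:1305.3240 — 2 statements merged into one kernel-verified Lean document; each statement's English description precedes it below -/
import Mathlib

section
/- The Gibbs free energy decreases along every positive solution of the balanced reaction network: if x : ℝ → ℝ^m is differentiable, x(t) is componentwise positive for all t, and x satisfies ẋ(t) = f(x(t)) = −Z B K Bᵀ Exp(Zᵀ Ln(x(t)/x*)), then for every t the function s ↦ G(x(s)) has derivative at t equal to −μ(t)ᵀ B K Bᵀ Exp(μ(t)), where μ(t) = Zᵀ Ln(x(t)/x*), and this derivative is ≤ 0. -/
open Matrix Real

/-!
Writing `μ = Zᵀ Ln(x/x*)`, the chain rule gives `d/dt G(x) = Ln(x/x*) ⬝ ẋ = -μ ⬝ B K Bᵀ Exp(μ)`.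
This quadratic-type form splits over the reactions as `∑ⱼ κⱼ (μ_{h j} - μ_{t j}) (e^{μ_{h j}} - e^{μ_{t j}})`,
and each summand is nonnegative because `exp` is monotone.
-/

lemma Monotone.sub_mul_sub_nonneg {R : Type*} [Ring R] [LinearOrder R] [IsStrictOrderedRing R]
    {f : R → R} (hf : Monotone f) (a b : R) : 0 ≤ (a - b) * (f a - f b) := by
  rcases le_total a b with h | h
  · exact mul_nonneg_of_nonpos_of_nonpos (sub_nonpos.2 h) (sub_nonpos.2 (hf h))
  · exact mul_nonneg (sub_nonneg.2 h) (sub_nonneg.2 (hf h))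

lemma Matrix.dotProduct_mul_diagonal_mul_transpose_mulVec {ι ρ R : Type*} [Fintype ι] [Fintype ρ]
    [DecidableEq ρ] [CommSemiring R] (B : Matrix ι ρ R) (d : ρ → R) (u w : ι → R) :
    u ⬝ᵥ (B * diagonal d * Bᵀ) *ᵥ w = ∑ j, d j * (Bᵀ *ᵥ u) j * (Bᵀ *ᵥ w) j := by
  rw [← mulVec_mulVec, ← mulVec_mulVec, dotProduct_mulVec, ← mulVec_transpose]
  simp only [dotProduct, mulVec_diagonal]
  exact Finset.sum_congr rfl fun j _ => by ring

section Incidence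

variable {c r : Type*} [Fintype c] [DecidableEq c] {hd tl : r → c} {B : Matrix c r ℝ}

lemma transpose_mulVec_of_incidence (hht : ∀ j, hd j ≠ tl j)
    (hB : ∀ i j, B i j = if i = hd j then 1 else if i = tl j then -1 else 0)
    (f : c → ℝ) (j : r) : (Bᵀ *ᵥ f) j = f (hd j) - f (tl j) := by
  have hcol : (fun i => B i j) = Pi.single (hd j) 1 - Pi.single (tl j) 1 := by
    funext i
    by_cases h₁ : i = hd j
    · subst h₁
      simp [hB, hht j]
    · simp only [hB, h₁, Pi.sub_apply, Pi.single_apply, if_false, zero_sub]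
      split_ifs <;> simp
  have hBji : ∀ i, Bᵀ j i = B i j := fun _ => rfl
  simp only [mulVec, dotProduct, hBji, fun i => congrFun hcol i, Pi.sub_apply, sub_mul,
    Finset.sum_sub_distrib, Pi.single_apply, ite_mul, one_mul, zero_mul, Finset.sum_ite_eq',
    Finset.mem_univ, if_true]

variable [Fintype r] [DecidableEq r]

lemma dotProduct_incidence_laplacian_mulVec_comp_nonneg (hht : ∀ j, hd j ≠ tl j)
    (hB : ∀ i j, B i j = if i = hd j then 1 else if i = tl j then -1 else 0)
    {κ : r → ℝ} (hκ : ∀ j, 0 ≤ κ j) {f : ℝ → ℝ} (hf : Monotone f) (μ : c → ℝ) :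
    0 ≤ μ ⬝ᵥ (B * diagonal κ * Bᵀ) *ᵥ (fun ρ => f (μ ρ)) := by
  rw [dotProduct_mul_diagonal_mul_transpose_mulVec]
  refine Finset.sum_nonneg fun j _ => ?_
  rw [transpose_mulVec_of_incidence hht hB, transpose_mulVec_of_incidence hht hB, mul_assoc]
  exact mul_nonneg (hκ j) (hf.sub_mul_sub_nonneg _ _)

end Incidence

noncomputable def gibbsFreeEnergy {ι : Type*} [Fintype ι] (xs y : ι → ℝ) : ℝ :=
  ∑ i, (y i * log (y i / xs i) + xs i - y i)

lemma hasDerivAt_mul_log_div_add_sub {a u : ℝ} (ha : a ≠ 0) (hu : u ≠ 0) :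
    HasDerivAt (fun v => v * log (v / a) + a - v) (log (u / a)) u := by
  have hlog : HasDerivAt (fun v => log (v / a)) u⁻¹ u :=
    (((hasDerivAt_id' u).div_const a).log (div_ne_zero hu ha)).congr_deriv (by field_simp)
  refine ((((hasDerivAt_id' u).mul hlog).add_const a).sub (hasDerivAt_id' u)).congr_deriv ?_
  simp only [one_mul, mul_inv_cancel₀ hu]
  ring

lemma HasDerivAt.gibbsFreeEnergy {ι : Type*} [Fintype ι] {xs : ι → ℝ} (hxs : ∀ i, xs i ≠ 0)
    {x : ℝ → ι → ℝ} {x' : ι → ℝ} {t : ℝ} (hx : HasDerivAt x x' t) (hpos : ∀ i, x t i ≠ 0) :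
    HasDerivAt (fun s => gibbsFreeEnergy xs (x s)) ((fun i => Real.log (x t i / xs i)) ⬝ᵥ x') t :=
  HasDerivAt.fun_sum fun i _ =>
    ((hasDerivAt_mul_log_div_add_sub (hxs i) (hpos i)).comp t (hasDerivAt_pi.mp hx i) :)

theorem stmt_8_general (m c r : ℕ)
    (hd tl : Fin r → Fin c) (hht : ∀ j, hd j ≠ tl j)
    (B : Matrix (Fin c) (Fin r) ℝ)
    (hB : ∀ i j, B i j = if i = hd j then 1 else if i = tl j then -1 else 0)
    (κ : Fin r → ℝ) (hκ : ∀ j, 0 < κ j)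
    (Z : Matrix (Fin m) (Fin c) ℝ)
    (xs : Fin m → ℝ) (hxs : ∀ i, 0 < xs i)
    (x : ℝ → Fin m → ℝ) (hpos : ∀ t i, 0 < x t i)
    (μ : ℝ → Fin c → ℝ)
    (hμ : ∀ t, μ t = Zᵀ.mulVec (fun i => Real.log (x t i / xs i)))
    (hode : ∀ t, HasDerivAt x
      (-(Z * B * Matrix.diagonal κ * Bᵀ).mulVec (fun ρ => Real.exp (μ t ρ))) t) :
    ∀ t, HasDerivAt (fun s => ∑ i, (x s i * Real.log (x s i / xs i) + xs i - x s i))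
        (-(μ t ⬝ᵥ (B * Matrix.diagonal κ * Bᵀ).mulVec (fun ρ => Real.exp (μ t ρ)))) t ∧
      -(μ t ⬝ᵥ (B * Matrix.diagonal κ * Bᵀ).mulVec (fun ρ => Real.exp (μ t ρ))) ≤ 0 := by
  intro t
  have hG := (hode t).gibbsFreeEnergy (fun i => (hxs i).ne') (fun i => (hpos t i).ne')
  refine ⟨hG.congr_deriv ?_, neg_nonpos.2 <| dotProduct_incidence_laplacian_mulVec_comp_nonneg
    hht hB (fun j => (hκ j).le) exp_monotone (μ t)⟩
  rw [dotProduct_neg, show Z * B * diagonal κ * Bᵀ = Z * (B * diagonal κ * Bᵀ) by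
    simp only [Matrix.mul_assoc], ← mulVec_mulVec, dotProduct_mulVec, ← mulVec_transpose, hμ t]

/-- Along every componentwise positive solution of
`ẋ = −Z B K Bᵀ Exp(Zᵀ Ln(x/x*))`, the Gibbs free energy `G` satisfies
`d/dt G(x(t)) = −μ(t)ᵀ B K Bᵀ Exp(μ(t)) ≤ 0`, where `μ(t) = Zᵀ Ln(x(t)/x*)`. -/
theorem stmt_8 (m c r : ℕ) (hm : 0 < m) (hc : 0 < c) (hr : 0 < r)
    (hd tl : Fin r → Fin c) (hht : ∀ j, hd j ≠ tl j)
    (B : Matrix (Fin c) (Fin r) ℝ)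
    (hB : ∀ i j, B i j = if i = hd j then 1 else if i = tl j then -1 else 0)
    (κ : Fin r → ℝ) (hκ : ∀ j, 0 < κ j)
    (Z : Matrix (Fin m) (Fin c) ℝ)
    (xs : Fin m → ℝ) (hxs : ∀ i, 0 < xs i)
    (x : ℝ → Fin m → ℝ) (hpos : ∀ t i, 0 < x t i)
    (μ : ℝ → Fin c → ℝ)
    (hμ : ∀ t, μ t = Zᵀ.mulVec (fun i => Real.log (x t i / xs i)))
    (hode : ∀ t, HasDerivAt x
      (-(Z * B * Matrix.diagonal κ * Bᵀ).mulVec (fun ρ => Real.exp (μ t ρ))) t) :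
    ∀ t, HasDerivAt (fun s => ∑ i, (x s i * Real.log (x s i / xs i) + xs i - x s i))
        (-(μ t ⬝ᵥ (B * Matrix.diagonal κ * Bᵀ).mulVec (fun ρ => Real.exp (μ t ρ)))) t ∧
      -(μ t ⬝ᵥ (B * Matrix.diagonal κ * Bᵀ).mulVec (fun ρ => Real.exp (μ t ρ))) ≤ 0 :=
  stmt_8_general m c r hd tl hht B hB κ hκ Z xs hxs x hpos μ hμ hode
end

section
/- For a connected compartmental graph, the equilibria of the closed compartmental reaction–diffusion model are exactly the spatially uniform thermodynamic equilibria: a state X̄ = (x̄^1,…,x̄^N) with all compartments componentwise positive satisfies, for all k and i, 0 = −(1/m0_k) Σ_{j=1}^{N_e} D_{j k} m1_j r_{j,i}(X̄) (Σ_{l=1}^N D_{j l} x̄^l_i/x*_i) + f_i(x̄^k) if and only if x̄^1 = x̄^2 = ⋯ = x̄^N and Sᵀ Ln(x̄^1) = Sᵀ Ln(x*). -/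
/-!
Pair the balance law for species `i` in compartment `k` with `m0 k * log (x̄ᵏᵢ / x*ᵢ)` and sum
over `k` and `i`. With `y = x̄ / x*` and `γᵏ = Zᵀ Ln (x̄ᵏ / x*)`, diffusion contributes
`∑ m1ⱼ rⱼᵢ (y_p - y_q) (log y_p - log y_q)` over the edges `j = (p, q)` of the compartment graph,
and the reactions contribute `∑ m0ₖ κⱼ (γ_h - γ_t) (exp γ_h - exp γ_t)` over the reactions
`j = (h, t)`. Since `log` and `exp` are strictly increasing, every term is nonnegative, so at an
equilibrium all of them vanish: `y` is constant along each edge, hence (the graph being connected)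
on all compartments, and `Bᵀ γᵏ = 0`, i.e. `Sᵀ Ln x̄ᵏ = Sᵀ Ln x*`. Conversely these two conditions
make the diffusion and the reaction terms vanish separately.
-/

open Matrix Real

def Matrix.IsIncidence {ι V R : Type*} [Ring R] [DecidableEq V] (A : Matrix ι V R)
    (p q : ι → V) : Prop :=
  ∀ j, A j = Pi.single (p j) 1 - Pi.single (q j) 1

/-- For an incidence matrix `A`, the entropy production of flows along its edges: `f = log` gives
that of diffusion, `f = exp` that of mass-action reactions. -/
def Matrix.dissipation {ι V R : Type*} [Fintype ι] [Fintype V] [Ring R] (A : Matrix ι V R)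
    (c : ι → R) (f : R → R) (w : V → R) : R :=
  ∑ j, c j * ((A *ᵥ w) j * (A *ᵥ (f ∘ w)) j)

section StrictMonoOn

variable {R : Type*} [Ring R] [LinearOrder R] [IsStrictOrderedRing R] {f : R → R} {s : Set R}
  {a b : R}

theorem StrictMonoOn.sub_mul_sub_pos (hf : StrictMonoOn f s) (ha : a ∈ s) (hb : b ∈ s)
    (hab : a ≠ b) : 0 < (a - b) * (f a - f b) := by
  rcases hab.lt_or_gt with h | h
  · exact mul_pos_of_neg_of_neg (sub_neg.2 h) (sub_neg.2 (hf ha hb h))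
  · exact mul_pos (sub_pos.2 h) (sub_pos.2 (hf hb ha h))

theorem StrictMonoOn.sub_mul_sub_nonneg (hf : StrictMonoOn f s) (ha : a ∈ s) (hb : b ∈ s) :
    0 ≤ (a - b) * (f a - f b) := by
  rcases eq_or_ne a b with rfl | hab
  · simp
  · exact (hf.sub_mul_sub_pos ha hb hab).le

end StrictMonoOn

namespace Matrix.IsIncidence

variable {ι V R : Type*} [DecidableEq V] {p q : ι → V}

section Ring

variable [Ring R] {A : Matrix ι V R}

theorem of_apply (hpq : ∀ j, p j ≠ q j) (hp : ∀ j, A j (p j) = 1) (hq : ∀ j, A j (q j) = -1)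
    (h0 : ∀ j l, l ≠ p j → l ≠ q j → A j l = 0) : A.IsIncidence p q := by
  intro j
  ext l
  rcases eq_or_ne l (p j) with rfl | hlp
  · simp [hp, hpq j]
  rcases eq_or_ne l (q j) with rfl | hlq
  · simp [hq, hlp]
  · simp [h0 j l hlp hlq, hlp, hlq]

theorem transpose_of_ite {B : Matrix V ι R} {hd tl : ι → V} (hht : ∀ j, hd j ≠ tl j)
    (hB : ∀ i j, B i j = if i = hd j then 1 else if i = tl j then -1 else 0) :
    Bᵀ.IsIncidence hd tl :=
  .of_apply hht (by simp [hB]) (fun j => by simp [hB, (hht j).symm])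
    fun j l h1 h2 => by simp [hB, h1, h2]

variable [Fintype V]

theorem mulVec_apply (hA : A.IsIncidence p q) (v : V → R) (j : ι) :
    (A *ᵥ v) j = v (p j) - v (q j) := by
  rw [mulVec, hA j, sub_dotProduct, single_one_dotProduct, single_one_dotProduct]

theorem mulVec_comp_eq_zero (hA : A.IsIncidence p q) {w : V → R} (hw : A *ᵥ w = 0)
    (f : R → R) : A *ᵥ (f ∘ w) = 0 := by
  ext j
  have hj := congrFun hw j
  rw [hA.mulVec_apply, Pi.zero_apply, sub_eq_zero] at hj
  simp [hA.mulVec_apply, hj]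

theorem mulVec_eq_zero_iff (hA : A.IsIncidence p q)
    (hconn : ∀ v : V → R, A *ᵥ v = 0 → ∀ k l, v k = v l) {v : V → R} :
    A *ᵥ v = 0 ↔ ∀ k l, v k = v l :=
  ⟨hconn v, fun h => funext fun j => by simp [hA.mulVec_apply, h (p j) (q j)]⟩

end Ring

theorem forall_eq_iff_forall_mulVec_div_eq_zero {ι' : Type*} [Fintype V] [DivisionRing R]
    {A : Matrix ι V R} (hA : A.IsIncidence p q)
    (hconn : ∀ v : V → R, A *ᵥ v = 0 → ∀ k l, v k = v l) {x : V → ι' → R} {xs : ι' → R}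
    (hxs : ∀ i, xs i ≠ 0) : (∀ k l, x k = x l) ↔ ∀ i, A *ᵥ (fun k => x k i / xs i) = 0 := by
  simp only [hA.mulVec_eq_zero_iff hconn, div_left_inj' (hxs _), funext_iff]
  exact ⟨fun h i k l => h k l i, fun h k l i => h i k l⟩

variable [Fintype V] [Fintype ι] [Ring R] {A : Matrix ι V R} {c : ι → R} {f : R → R} {w : V → R}

theorem dissipation_eq (hA : A.IsIncidence p q) :
    A.dissipation c f w = ∑ j, c j * ((w (p j) - w (q j)) * (f (w (p j)) - f (w (q j)))) := by
  simp only [dissipation, hA.mulVec_apply, Function.comp_apply]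

variable [LinearOrder R] [IsStrictOrderedRing R] {s : Set R}

theorem dissipation_nonneg (hA : A.IsIncidence p q) (hc : ∀ j, 0 ≤ c j)
    (hf : StrictMonoOn f s) (hw : ∀ l, w l ∈ s) : 0 ≤ A.dissipation c f w := by
  rw [hA.dissipation_eq]
  exact Finset.sum_nonneg fun j _ => mul_nonneg (hc j) (hf.sub_mul_sub_nonneg (hw _) (hw _))

theorem dissipation_eq_zero_iff (hA : A.IsIncidence p q) (hc : ∀ j, 0 < c j)
    (hf : StrictMonoOn f s) (hw : ∀ l, w l ∈ s) : A.dissipation c f w = 0 ↔ A *ᵥ w = 0 := by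
  rw [hA.dissipation_eq, Fintype.sum_eq_zero_iff_of_nonneg
    fun j => mul_nonneg (hc j).le (hf.sub_mul_sub_nonneg (hw _) (hw _)), funext_iff, funext_iff]
  refine forall_congr' fun j => ?_
  rw [hA.mulVec_apply, Pi.zero_apply, mul_eq_zero, or_iff_right (hc j).ne', sub_eq_zero]
  exact ⟨fun h => by_contra fun hne => (hf.sub_mul_sub_pos (hw _) (hw _) hne).ne' h,
    fun h => by simp [h]⟩

end Matrix.IsIncidence

theorem sum_mul_sum_mul_mulVec_eq_dissipation {ι V R : Type*} [Fintype ι] [Fintype V]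
    [CommRing R] (A : Matrix ι V R) (c : ι → R) (f : R → R) (w : V → R) :
    ∑ k, f (w k) * ∑ j, A j k * c j * (A *ᵥ w) j = A.dissipation c f w := by
  simp only [dissipation, Finset.mul_sum]
  rw [Finset.sum_comm]
  refine Finset.sum_congr rfl fun j _ => ?_
  generalize (A *ᵥ w) j = a
  simp only [mulVec, dotProduct, Function.comp_apply, Finset.mul_sum]
  exact Finset.sum_congr rfl fun k _ => by ring

theorem dotProduct_mulVec_comp_eq_dissipation {ι σ ρ R : Type*} [Fintype ι] [Fintype σ]
    [Fintype ρ] [DecidableEq ρ] [CommRing R] (Z : Matrix ι σ R) (B : Matrix σ ρ R) (κ : ρ → R)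
    (f : R → R) (L : ι → R) :
    L ⬝ᵥ (Z * B * diagonal κ * Bᵀ) *ᵥ (f ∘ (Zᵀ *ᵥ L)) = Bᵀ.dissipation κ f (Zᵀ *ᵥ L) := by
  rw [← mulVec_mulVec, ← mulVec_mulVec, ← mulVec_mulVec, dotProduct_mulVec, ← mulVec_transpose,
    dotProduct_mulVec, ← mulVec_transpose]
  simp only [dotProduct, mulVec_diagonal, dissipation]
  exact Finset.sum_congr rfl fun j _ => by ring

theorem transpose_mul_mulVec_log_eq_iff {ι σ ρ : Type*} [Fintype ι] [Fintype σ]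
    (Z : Matrix ι σ ℝ) (B : Matrix σ ρ ℝ) {x y : ι → ℝ} (hx : ∀ i, x i ≠ 0) (hy : ∀ i, y i ≠ 0) :
    (Z * B)ᵀ *ᵥ (fun i => log (x i)) = (Z * B)ᵀ *ᵥ (fun i => log (y i)) ↔
      Bᵀ *ᵥ (Zᵀ *ᵥ fun i => log (x i / y i)) = 0 := by
  rw [← sub_eq_zero, ← mulVec_sub, transpose_mul, ← mulVec_mulVec]
  have : (fun i => log (x i)) - (fun i => log (y i)) = fun i => log (x i / y i) :=
    funext fun i => (log_div (hx i) (hy i)).symm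
  rw [this]

theorem balance_iff_dissipation_eq_zero {K I : Type*} [Fintype K] [Fintype I]
    {S F L : K → I → ℝ} {m0 : K → ℝ} {P : I → ℝ} {Q : K → ℝ} (hm0 : ∀ k, 0 < m0 k)
    (hSP : ∀ i, ∑ k, L k i * S k i = P i) (hP : ∀ i, 0 ≤ P i) (hS : ∀ i, P i = 0 → ∀ k, S k i = 0)
    (hFQ : ∀ k, ∑ i, L k i * F k i = -Q k) (hQ : ∀ k, 0 ≤ Q k)
    (hF : ∀ k, Q k = 0 → ∀ i, F k i = 0) :
    (∀ k i, (0 : ℝ) = -(1 / m0 k) * S k i + F k i) ↔ (∀ i, P i = 0) ∧ ∀ k, Q k = 0 := by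
  refine ⟨fun hbal => ?_, fun ⟨hP0, hQ0⟩ k i => by simp [hS i (hP0 i) k, hF k (hQ0 k) i]⟩
  have hSF : ∀ k i, S k i = m0 k * F k i := fun k i => by
    have := hbal k i
    field_simp [(hm0 k).ne'] at this
    linarith
  have hmQ : ∀ k, 0 ≤ m0 k * Q k := fun k => mul_nonneg (hm0 k).le (hQ k)
  have htotal : ∑ i, P i + ∑ k, m0 k * Q k = 0 := by
    simp only [← hSP, hSF]
    rw [Finset.sum_comm, ← Finset.sum_add_distrib]
    refine Finset.sum_eq_zero fun k _ => ?_
    simp only [mul_left_comm (L k _), ← Finset.mul_sum, hFQ]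
    ring
  obtain ⟨hP0, hQ0⟩ := (add_eq_zero_iff_of_nonneg (Finset.sum_nonneg fun i _ => hP i)
    (Finset.sum_nonneg fun k _ => hmQ k)).1 htotal
  rw [Fintype.sum_eq_zero_iff_of_nonneg hP, funext_iff] at hP0
  rw [Fintype.sum_eq_zero_iff_of_nonneg hmQ, funext_iff] at hQ0
  exact ⟨hP0, fun k => (mul_eq_zero.1 (hQ0 k)).resolve_left (hm0 k).ne'⟩

theorem stmt_11_general (m c r : ℕ)
    (hd tl : Fin r → Fin c) (hht : ∀ j, hd j ≠ tl j)
    (B : Matrix (Fin c) (Fin r) ℝ)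
    (hB : ∀ i j, B i j = if i = hd j then 1 else if i = tl j then -1 else 0)
    (κ : Fin r → ℝ) (hκ : ∀ j, 0 < κ j)
    (Z : Matrix (Fin m) (Fin c) ℝ)
    (xs : Fin m → ℝ) (hxs : ∀ i, 0 < xs i)
    (N Ne : ℕ)
    (D : Matrix (Fin Ne) (Fin N) ℝ)
    (hD : ∀ j, ∃ p q : Fin N, p ≠ q ∧ D j p = 1 ∧ D j q = -1 ∧
      ∀ l, l ≠ p → l ≠ q → D j l = 0)
    (hconn : ∀ v : Fin N → ℝ, D.mulVec v = 0 → ∀ k l, v k = v l)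
    (m0 : Fin N → ℝ) (hm0 : ∀ k, 0 < m0 k)
    (m1 : Fin Ne → ℝ) (hm1 : ∀ j, 0 < m1 j)
    (rr : Fin Ne → Fin m → (Fin N → Fin m → ℝ) → ℝ)
    (α : ℝ) (hα : 0 < α) (hrα : ∀ j i X, α ≤ rr j i X)
    (xbar : Fin N → Fin m → ℝ) (hxbar : ∀ k i, 0 < xbar k i) :
    (∀ k i, (0 : ℝ) =
        -(1 / m0 k) * ∑ j, D j k * m1 j * rr j i xbar * (∑ l, D j l * (xbar l i / xs i))
          + (-(Z * B * Matrix.diagonal κ * Bᵀ).mulVec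
              (fun ρ => Real.exp (Zᵀ.mulVec (fun i' => Real.log (xbar k i' / xs i')) ρ))) i)
      ↔ ((∀ k l, xbar k = xbar l) ∧
        ∀ k, (Z * B)ᵀ.mulVec (fun i => Real.log (xbar k i)) =
          (Z * B)ᵀ.mulVec (fun i => Real.log (xs i))) := by
  choose p q hpq hDp hDq hD0 using hD
  have hDinc : D.IsIncidence p q := .of_apply hpq hDp hDq hD0
  have hBinc : Bᵀ.IsIncidence hd tl := .transpose_of_ite hht hB
  set y : Fin m → Fin N → ℝ := fun i k => xbar k i / xs i
  set γ : Fin N → Fin c → ℝ := fun k => Zᵀ *ᵥ fun i => log (y i k)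
  set S : Fin N → Fin m → ℝ := fun k i => ∑ j, D j k * m1 j * rr j i xbar * (D *ᵥ y i) j
  set F : Fin N → Fin m → ℝ := fun k => -((Z * B * diagonal κ * Bᵀ) *ᵥ (exp ∘ γ k))
  set a : Fin m → Fin Ne → ℝ := fun i j => m1 j * rr j i xbar
  have huniform : (∀ k l, xbar k = xbar l) ↔ ∀ i, D *ᵥ y i = 0 :=
    hDinc.forall_eq_iff_forall_mulVec_div_eq_zero hconn fun i => (hxs i).ne'
  have hthermo (k) : (Z * B)ᵀ *ᵥ (fun i => log (xbar k i)) = (Z * B)ᵀ *ᵥ (fun i => log (xs i)) ↔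
      Bᵀ *ᵥ γ k = 0 :=
    transpose_mul_mulVec_log_eq_iff Z B (fun i => (hxbar k i).ne') fun i => (hxs i).ne'
  have ha : ∀ i j, 0 < a i j := fun i j => mul_pos (hm1 j) (hα.trans_le (hrα j i xbar))
  have hy : ∀ i k, y i k ∈ Set.Ioi 0 := fun i k => div_pos (hxbar k i) (hxs i)
  have hexp : StrictMonoOn exp Set.univ := exp_strictMono.strictMonoOn _
  have hdiff (i) := hDinc.dissipation_eq_zero_iff (ha i) strictMonoOn_log (hy i)
  have hreac (k) := hBinc.dissipation_eq_zero_iff (w := γ k) hκ hexp fun _ => trivial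
  change (∀ k i, (0 : ℝ) = -(1 / m0 k) * S k i + F k i) ↔ _
  simp only [huniform, hthermo, ← hdiff, ← hreac]
  refine balance_iff_dissipation_eq_zero (L := fun k i => log (y i k)) hm0
    (fun i => by rw [← sum_mul_sum_mul_mulVec_eq_dissipation]; simp only [S, a, mul_assoc])
    (fun i => hDinc.dissipation_nonneg (fun j => (ha i j).le) strictMonoOn_log (hy i))
    (fun i h k => by simp [S, (hdiff i).1 h])
    (fun k => by rw [← dotProduct_mulVec_comp_eq_dissipation, ← dotProduct_neg]; rfl)
    (fun k => hBinc.dissipation_nonneg (fun j => (hκ j).le) hexp fun _ => trivial)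
    fun k h i => by
      simp only [F, ← mulVec_mulVec, hBinc.mulVec_comp_eq_zero ((hreac k).1 h) exp, mulVec_zero,
        neg_zero, Pi.zero_apply]

/-- For a connected compartmental graph, the equilibria of the closed
compartmental model are exactly the spatially uniform thermodynamic equilibria:
a componentwise positive state `X̄ = (x̄^1,…,x̄^N)` satisfies
`0 = −(1/m0_k) ∑_j D_{jk} m1_j r_{j,i}(X̄) (∑_l D_{jl} x̄^l_i/x*_i) + f_i(x̄^k)` for all
`k, i` iff all compartments are equal and `Sᵀ Ln(x̄^1) = Sᵀ Ln(x*)` (`S = Z B`). -/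
theorem stmt_11 (m c r : ℕ) (hm : 0 < m) (hc : 0 < c) (hr : 0 < r)
    (hd tl : Fin r → Fin c) (hht : ∀ j, hd j ≠ tl j)
    (B : Matrix (Fin c) (Fin r) ℝ)
    (hB : ∀ i j, B i j = if i = hd j then 1 else if i = tl j then -1 else 0)
    (κ : Fin r → ℝ) (hκ : ∀ j, 0 < κ j)
    (Z : Matrix (Fin m) (Fin c) ℝ)
    (xs : Fin m → ℝ) (hxs : ∀ i, 0 < xs i)
    (N Ne : ℕ) (hN : 0 < N) (hNe : 0 < Ne)
    (D : Matrix (Fin Ne) (Fin N) ℝ)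
    (hD : ∀ j, ∃ p q : Fin N, p ≠ q ∧ D j p = 1 ∧ D j q = -1 ∧
      ∀ l, l ≠ p → l ≠ q → D j l = 0)
    (hconn : ∀ v : Fin N → ℝ, D.mulVec v = 0 → ∀ k l, v k = v l)
    (m0 : Fin N → ℝ) (hm0 : ∀ k, 0 < m0 k)
    (m1 : Fin Ne → ℝ) (hm1 : ∀ j, 0 < m1 j)
    (rr : Fin Ne → Fin m → (Fin N → Fin m → ℝ) → ℝ)
    (hrcont : ∀ j i, Continuous (rr j i))
    (α : ℝ) (hα : 0 < α) (hrα : ∀ j i X, α ≤ rr j i X)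
    (xbar : Fin N → Fin m → ℝ) (hxbar : ∀ k i, 0 < xbar k i) :
    (∀ k i, (0 : ℝ) =
        -(1 / m0 k) * ∑ j, D j k * m1 j * rr j i xbar * (∑ l, D j l * (xbar l i / xs i))
          + (-(Z * B * Matrix.diagonal κ * Bᵀ).mulVec
              (fun ρ => Real.exp (Zᵀ.mulVec (fun i' => Real.log (xbar k i' / xs i')) ρ))) i)
      ↔ ((∀ k l, xbar k = xbar l) ∧
        ∀ k, (Z * B)ᵀ.mulVec (fun i => Real.log (xbar k i)) =
          (Z * B)ᵀ.mulVec (fun i => Real.log (xs i))) :=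
  stmt_11_general m c r hd tl hht B hB κ hκ Z xs hxs N Ne D hD hconn m0 hm0 m1 hm1 rr α hα hrα xbar
    hxbar
end
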